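/- arXiv:2601.16820 — 2 statements merged into one kernel-verified Lean document; each statement's English description precedes it below -/
import Mathlib

section
/- For every σ_k > 0, the Fourier coefficients d_n = (1/2π)∫₀^{2π} e^{-inθ}/(σ_k² + cos²θ) dθ satisfy d_n = 0 for odd n, and d_n = 2(-1)^{n/2} e_k |z_in|^{|n|/2} · λ_k²/λ_k² for even n — i.e., with |M(θ)|² = λ_k²(σ_k²+cos²θ), (1/2π)∫₀^{2π} e^{-inθ}|M(θ)|^{-2} dθ = (e_k/λ_k²)·2(-1)^{n/2}|z_in|^{|n|/2} for even n and 0 for odd n, where e_k = ((2σ_k²+1)²-1)^{-1/2} and z_in = -(2σ_k²+1)+√((2σ_k²+1)²-1). -/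
/-!
Put `a = 2σ² + 1`, so that `σ² + cos² θ = (a + cos 2θ) / 2`. Comparing with the Poisson kernel
`∑ r^|m| e^{imφ} = (1 - r²) / (1 - 2r cos φ + r²)` at the root `r = √(a² - 1) - a ∈ (-1, 0)` of
`r² + 2ar + 1 = 0` (this `r` is `z_in`) gives `1 / (a + cos φ) = (a² - 1)^{-1/2} ∑ r^|m| e^{imφ}`.
Hence `e^{-inθ} / (σ² + cos² θ)` is an absolutely convergent series in `e^{i(2m - n)θ}`;
integrating term by term over a period keeps only the term `2m = n`.
-/

open Real Complex

theorem neg_pow_natAbs {R : Type*} [DivisionRing R] (x : R) (k : ℤ) :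
    (-x) ^ k.natAbs = (-1 : R) ^ k * x ^ k.natAbs := by
  rw [neg_pow]
  rcases Int.even_or_odd k with hk | hk
  · rw [hk.neg_one_zpow, (Int.natAbs_even.2 hk).neg_one_pow]
  · rw [hk.neg_one_zpow, (Int.natAbs_odd.2 hk).neg_one_pow]

theorem sq_norm_ofReal_mul_add_I_mul (l s t : ℝ) :
    ‖(l : ℂ) * (s + I * t)‖ ^ 2 = l ^ 2 * (s ^ 2 + t ^ 2) := by
  rw [Complex.sq_norm, normSq_mul, normSq_ofReal, mul_comm I, normSq_add_mul_I]; ring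

theorem HasSum.eq_ite_even {M : Type*} [AddCommMonoid M] [TopologicalSpace M] [T2Space M]
    {g : ℤ → M} {x : M} {n : ℤ} (h : HasSum (fun m => if 2 * m = n then g m else 0) x) :
    x = if Even n then g (n / 2) else 0 := by
  split_ifs with hn
  · obtain ⟨k, rfl⟩ := hn
    have hsingle := hasSum_single (f := fun m => if 2 * m = k + k then g m else 0) k
      fun m hm => if_neg (by omega)
    rw [h.unique hsingle, if_pos (by omega), show (k + k) / 2 = k by omega]
  · refine h.unique ?_
    convert hasSum_zero with m
    exact if_neg fun h2m => hn ⟨m, by omega⟩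

theorem summable_pow_natAbs {r : ℝ} (hr : |r| < 1) : Summable fun m : ℤ => |r| ^ m.natAbs := by
  have hgeo := summable_geometric_of_lt_one (abs_nonneg r) hr
  exact .of_nat_of_neg (by simpa using hgeo) (by simpa using hgeo)

theorem integral_exp_int_mul_I (k : ℤ) :
    ∫ θ in (0:ℝ)..2 * π, cexp (I * k * θ) = if k = 0 then (2 * π : ℂ) else 0 := by
  split_ifs with hk
  · simp [hk]
  have hc : I * k ≠ 0 := mul_ne_zero I_ne_zero (Int.cast_ne_zero.mpr hk)
  have hperiod : cexp (I * k * (2 * π)) = 1 := by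
    rw [← exp_int_mul_two_pi_mul_I k]; ring_nf
  simp [integral_exp_mul_complex hc, hperiod]

theorem hasSum_intervalIntegral_of_hasSum_exp {ι : Type*} [Countable ι] {c : ι → ℂ}
    (hc : Summable (‖c ·‖)) (k : ι → ℤ) {f : ℝ → ℂ}
    (hf : ∀ θ : ℝ, HasSum (fun i => c i * cexp (I * k i * θ)) (f θ)) :
    HasSum (fun i => if k i = 0 then 2 * π * c i else 0) (∫ θ in (0:ℝ)..2 * π, f θ) := by
  let F : ι → C(ℝ, ℂ) := fun i => ⟨fun θ => c i * cexp (I * k i * θ), by fun_prop⟩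
  have hF_norm (i : ι) (K : TopologicalSpace.Compacts ℝ) : ‖(F i).restrict K‖ ≤ ‖c i‖ :=
    (ContinuousMap.norm_le _ (norm_nonneg _)).2 fun θ => by
      rw [ContinuousMap.restrict_apply]
      simp [F, Complex.norm_exp]
  have hswap := intervalIntegral.hasSum_intervalIntegral_of_summable_norm (a := 0) (b := 2 * π)
    (hc.of_nonneg_of_le (fun _ => norm_nonneg _) fun i => hF_norm i _)
  have hint (i : ι) : ∫ θ in (0:ℝ)..2 * π, F i θ = if k i = 0 then 2 * π * c i else 0 := by
    simp only [F, ContinuousMap.coe_mk, intervalIntegral.integral_const_mul, integral_exp_int_mul_I]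
    split_ifs <;> ring
  have hf_eq : f = fun θ => ∑' i, F i θ := funext fun θ => (hf θ).tsum_eq.symm
  rw [hf_eq]
  simpa only [hint] using hswap

theorem hasSum_poissonKernel {r : ℝ} (hr : |r| < 1) (φ : ℝ) :
    HasSum (fun m : ℤ => (r : ℂ) ^ m.natAbs * cexp (I * m * φ))
      ((1 - r ^ 2) / (1 - 2 * r * Real.cos φ + r ^ 2)) := by
  set w := cexp (φ * I) with hw
  have hw_norm : ‖w‖ = 1 := norm_exp_ofReal_mul_I φ
  have hrw : ‖(r : ℂ) * w‖ < 1 := by rw [norm_mul, hw_norm, norm_real]; simpa using hr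
  have hrw' : ‖(r : ℂ) * w⁻¹‖ < 1 := by
    rw [norm_mul, norm_inv, hw_norm, norm_real]; simpa using hr
  have hpos : HasSum (fun j : ℕ => (r : ℂ) ^ (j : ℤ).natAbs * cexp (I * (j : ℤ) * φ))
      (1 - r * w)⁻¹ := by
    refine (hasSum_geometric_of_norm_lt_one hrw).congr_fun fun j => ?_
    rw [Int.natAbs_natCast, mul_pow, hw, ← Complex.exp_nat_mul]
    congr 2; push_cast; ring
  have hneg : HasSum
      (fun j : ℕ => (r : ℂ) ^ (-((j : ℤ) + 1)).natAbs * cexp (I * (-((j : ℤ) + 1) : ℤ) * φ))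
      (r * w⁻¹ * (1 - r * w⁻¹)⁻¹) := by
    refine ((hasSum_geometric_of_norm_lt_one hrw').mul_left (r * w⁻¹)).congr_fun fun j => ?_
    rw [show (-((j : ℤ) + 1)).natAbs = j + 1 by omega, ← pow_succ', mul_pow, inv_pow, hw,
      ← Complex.exp_nat_mul, ← Complex.exp_neg]
    congr 2; push_cast; ring
  convert HasSum.of_nat_of_neg_add_one
    (f := fun m : ℤ => (r : ℂ) ^ m.natAbs * cexp (I * m * φ)) hpos hneg using 1
  set v := w⁻¹ with hv
  have hwv : w * v = 1 := mul_inv_cancel₀ (exp_ne_zero _)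
  have h1 : 1 - (r : ℂ) * w ≠ 0 := sub_ne_zero.mpr fun h => by simp [← h] at hrw
  have h2 : 1 - (r : ℂ) * v ≠ 0 := sub_ne_zero.mpr fun h => by simp [← h] at hrw'
  have hcos : (Real.cos φ : ℂ) = (w + v) / 2 := by
    rw [ofReal_cos, Complex.cos, hv, hw, ← Complex.exp_neg]; ring_nf
  have hden : 1 - 2 * r * ((w + v) / 2) + r ^ 2 = (1 - r * w) * (1 - r * v) := by
    linear_combination (-r ^ 2) * hwv
  rw [hcos, hden]
  field_simp
  linear_combination r ^ 2 * hwv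

theorem abs_sqrt_sq_sub_one_sub_lt_one {a : ℝ} (ha : 1 < a) : |√(a ^ 2 - 1) - a| < 1 := by
  have hS2 : √(a ^ 2 - 1) ^ 2 = a ^ 2 - 1 := sq_sqrt (by nlinarith)
  exact abs_lt.2 ⟨by nlinarith [sqrt_nonneg (a ^ 2 - 1)], by nlinarith [sqrt_nonneg (a ^ 2 - 1)]⟩

theorem hasSum_div_add_cos {a : ℝ} (ha : 1 < a) (φ : ℝ) :
    HasSum (fun m : ℤ => ((√(a ^ 2 - 1) - a : ℝ) : ℂ) ^ m.natAbs * cexp (I * m * φ))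
      (√(a ^ 2 - 1) / (a + Real.cos φ)) := by
  set S := √(a ^ 2 - 1)
  have hS2 : S ^ 2 = a ^ 2 - 1 := sq_sqrt (by nlinarith)
  have haS : 0 < a - S := by nlinarith [sqrt_nonneg (a ^ 2 - 1)]
  have hpos : 0 < a + Real.cos φ := by linarith [neg_one_le_cos φ]
  have hden : 1 - 2 * (S - a) * Real.cos φ + (S - a) ^ 2 = 2 * (a - S) * (a + Real.cos φ) := by
    linear_combination hS2
  have hval : S / (a + Real.cos φ) =
      (1 - (S - a) ^ 2) / (1 - 2 * (S - a) * Real.cos φ + (S - a) ^ 2) := by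
    rw [hden]
    field_simp
    linear_combination -hS2
  convert hasSum_poissonKernel (abs_sqrt_sq_sub_one_sub_lt_one ha) φ using 1
  exact_mod_cast hval

theorem hasSum_exp_div_add_cos_two_mul {a : ℝ} (ha : 1 < a) (n : ℤ) (θ : ℝ) :
    HasSum (fun m : ℤ => (√(a ^ 2 - 1) : ℂ)⁻¹ * ((√(a ^ 2 - 1) - a : ℝ) : ℂ) ^ m.natAbs *
        cexp (I * (2 * m - n : ℤ) * θ))
      (cexp (-I * n * θ) / (a + Real.cos (2 * θ))) := by
  have hS : (√(a ^ 2 - 1) : ℂ) ≠ 0 := ofReal_ne_zero.2 (sqrt_pos.2 (by nlinarith)).ne'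
  have hval : cexp (-I * n * θ) / (a + Real.cos (2 * θ)) =
      (√(a ^ 2 - 1) : ℂ)⁻¹ * cexp (-I * n * θ) * (√(a ^ 2 - 1) / (a + Real.cos (2 * θ))) := by
    field_simp
  rw [hval]
  refine ((hasSum_div_add_cos ha (2 * θ)).mul_left _).congr_fun fun m => ?_
  rw [show I * (2 * m - n : ℤ) * θ = -I * n * θ + I * m * (2 * θ : ℝ) by push_cast; ring,
    Complex.exp_add]
  ring

theorem hasSum_integral_exp_div_add_cos_two_mul {a : ℝ} (ha : 1 < a) (n : ℤ) :
    HasSum (fun m : ℤ => if 2 * m = n then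
        2 * π * ((√(a ^ 2 - 1) : ℂ)⁻¹ * ((√(a ^ 2 - 1) - a : ℝ) : ℂ) ^ m.natAbs) else 0)
      (∫ θ in (0:ℝ)..2 * π, cexp (-I * n * θ) / (a + Real.cos (2 * θ))) := by
  have hsum : Summable fun m : ℤ =>
      ‖(√(a ^ 2 - 1) : ℂ)⁻¹ * ((√(a ^ 2 - 1) - a : ℝ) : ℂ) ^ m.natAbs‖ :=
    ((summable_pow_natAbs (abs_sqrt_sq_sub_one_sub_lt_one ha)).mul_left |√(a ^ 2 - 1)|⁻¹).congr
      fun m => by simp only [norm_mul, norm_inv, norm_pow, Complex.norm_real, Real.norm_eq_abs]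
  simpa only [sub_eq_zero] using
    hasSum_intervalIntegral_of_hasSum_exp hsum _ (hasSum_exp_div_add_cos_two_mul ha n)

theorem stmt10_general (lk σk : ℝ) (hσ : 0 < σk) (n : ℤ) :
    (Odd n →
      ((1/(2*π) : ℝ) : ℂ) * ∫ θ in (0:ℝ)..(2*π),
          Complex.exp (-Complex.I * (n : ℂ) * (θ : ℂ)) /
            ((‖(lk : ℂ) * ((σk : ℂ) + Complex.I * (Real.cos θ : ℂ))‖ ^ 2 : ℝ) : ℂ)
        = 0)
    ∧ (Even n →
      ((1/(2*π) : ℝ) : ℂ) * ∫ θ in (0:ℝ)..(2*π),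
          Complex.exp (-Complex.I * (n : ℂ) * (θ : ℂ)) /
            ((‖(lk : ℂ) * ((σk : ℂ) + Complex.I * (Real.cos θ : ℂ))‖ ^ 2 : ℝ) : ℂ)
        = ((((Real.sqrt ((2*σk^2 + 1)^2 - 1))⁻¹ / lk^2) * (2 * (-1 : ℝ)^(n/2)) *
            ((2*σk^2 + 1) - Real.sqrt ((2*σk^2 + 1)^2 - 1)) ^ (n.natAbs / 2) : ℝ) : ℂ)) := by
  set a : ℝ := 2 * σk ^ 2 + 1
  have ha : 1 < a := by simp only [a]; nlinarith
  have hintegrand (θ : ℝ) : cexp (-I * n * θ) / ((‖(lk : ℂ) * (σk + I * Real.cos θ)‖ ^ 2 : ℝ) : ℂ)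
      = 2 / lk ^ 2 * (cexp (-I * n * θ) / (a + Real.cos (2 * θ))) := by
    have hden : (a : ℂ) + Real.cos (2 * θ) = 2 * ((σk ^ 2 + Real.cos θ ^ 2 : ℝ) : ℂ) := by
      push_cast [a, Real.cos_two_mul]; ring
    rw [sq_norm_ofReal_mul_add_I_mul, hden, ofReal_mul]
    generalize ((σk ^ 2 + Real.cos θ ^ 2 : ℝ) : ℂ) = X
    push_cast; ring
  simp_rw [hintegrand, intervalIntegral.integral_const_mul,
    (hasSum_integral_exp_div_add_cos_two_mul ha n).eq_ite_even]
  refine ⟨fun hodd => by simp [Int.not_even_iff_odd.2 hodd], fun heven => ?_⟩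
  obtain ⟨m, rfl⟩ := heven
  rw [if_pos ⟨m, rfl⟩, show (m + m).natAbs / 2 = ((m + m) / 2).natAbs by omega]
  have hπ : (π : ℂ) ≠ 0 := ofReal_ne_zero.2 pi_ne_zero
  push_cast
  rw [show (√(a ^ 2 - 1) : ℂ) - a = -(a - √(a ^ 2 - 1)) by ring, neg_pow_natAbs]
  field_simp

/-- Fourier coefficients of |M|⁻² with M(θ) = λ_k(σ_k + i cos θ):
    they vanish for odd n and equal (e_k/λ_k²)·2(-1)^{n/2}|z_in|^{|n|/2}
    for even n. -/
theorem stmt10 (lk σk : ℝ) (hl : 0 < lk) (hσ : 0 < σk) (n : ℤ) :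
    (Odd n →
      ((1/(2*π) : ℝ) : ℂ) * ∫ θ in (0:ℝ)..(2*π),
          Complex.exp (-Complex.I * (n : ℂ) * (θ : ℂ)) /
            ((‖(lk : ℂ) * ((σk : ℂ) + Complex.I * (Real.cos θ : ℂ))‖ ^ 2 : ℝ) : ℂ)
        = 0)
    ∧ (Even n →
      ((1/(2*π) : ℝ) : ℂ) * ∫ θ in (0:ℝ)..(2*π),
          Complex.exp (-Complex.I * (n : ℂ) * (θ : ℂ)) /
            ((‖(lk : ℂ) * ((σk : ℂ) + Complex.I * (Real.cos θ : ℂ))‖ ^ 2 : ℝ) : ℂ)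
        = ((((Real.sqrt ((2*σk^2 + 1)^2 - 1))⁻¹ / lk^2) * (2 * (-1 : ℝ)^(n/2)) *
            ((2*σk^2 + 1) - Real.sqrt ((2*σk^2 + 1)^2 - 1)) ^ (n.natAbs / 2) : ℝ) : ℂ)) :=
  stmt10_general lk σk hσ n
end

section
/- Let k ≥ 1, σ_k > 0, τ_k ∈ ℝ, λ_k > 0 and E > 0. Define the inviscid integral J(σ_k, τ_k) = (4π²k e_k/(E λ_k))·(1 - |z_in| + 2σ_k|z_in|τ_k), where z_in = -(2σ_k²+1)+√((2σ_k²+1)²-1) and e_k = ((2σ_k²+1)²-1)^{-1/2}. Then for τ_k ≥ 0 fixed, the map σ_k ↦ J(σ_k, 0) (i.e. with τ_k = 0) is positive and strictly decreasing in σ_k on (0,∞), and J(σ_k, 0) → 0 as σ_k → ∞. -/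
open Real Filter

/-! With `s = √(σ² + 1)` one has `√((2σ² + 1)² - 1) = 2σs` and `1 - |z_in| = 2σ(s - σ)`, so
`e_k (1 - |z_in|) = (s - σ)/s = 1/(s(s + σ)) = (σ² + 1 + σ s)⁻¹`. The denominator is positive,
strictly increasing on `(0, ∞)` and unbounded, which gives all three claims. -/

lemma sqrt_two_mul_sq_add_one_sq_sub_one {σ : ℝ} (hσ : 0 ≤ σ) :
    √((2*σ^2 + 1)^2 - 1) = 2*σ*√(σ^2 + 1) := by
  rw [show (2*σ^2 + 1)^2 - 1 = (2*σ)^2*(σ^2 + 1) by ring, sqrt_mul (sq_nonneg _),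
    sqrt_sq (by positivity)]

lemma inv_sqrt_mul_one_sub_sub_sqrt {σ : ℝ} (hσ : 0 < σ) :
    (√((2*σ^2 + 1)^2 - 1))⁻¹ * (1 - ((2*σ^2 + 1) - √((2*σ^2 + 1)^2 - 1))) =
      (σ^2 + 1 + σ*√(σ^2 + 1))⁻¹ := by
  have hs2 : √(σ^2 + 1)^2 = σ^2 + 1 := sq_sqrt (by positivity)
  rw [sqrt_two_mul_sq_add_one_sq_sub_one hσ.le]
  field_simp
  linear_combination (2*σ^2) * hs2

lemma strictMonoOn_sq_add_one_add_mul_sqrt :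
    StrictMonoOn (fun σ : ℝ => σ^2 + 1 + σ*√(σ^2 + 1)) (Set.Ici 0) := by
  intro x (hx : 0 ≤ x) y (hy : 0 ≤ y) hxy
  have hsq : x^2 < y^2 := by gcongr
  have hsqrt : √(x^2 + 1) ≤ √(y^2 + 1) := by gcongr
  have hmul : x*√(x^2 + 1) ≤ y*√(y^2 + 1) := by gcongr
  simp only
  linarith

lemma tendsto_sq_add_one_add_mul_sqrt_atTop :
    Tendsto (fun σ : ℝ => σ^2 + 1 + σ*√(σ^2 + 1)) atTop atTop := by
  refine tendsto_atTop_mono' atTop ?_ (tendsto_pow_atTop two_ne_zero)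
  filter_upwards [eventually_ge_atTop 0] with σ hσ
  have : 0 ≤ σ*√(σ^2 + 1) := by positivity
  linarith

/-- The inviscid integral J(σ_k, τ_k) = (4π²k e_k/(E λ_k))(1 - |z_in| + 2σ_k|z_in|τ_k):
    for τ_k = 0 it is positive, strictly decreasing in σ_k on (0,∞), and tends to 0
    as σ_k → ∞. -/
theorem stmt15 (k : ℕ) (hk : 1 ≤ k) (E lk : ℝ) (hE : 0 < E) (hl : 0 < lk)
    (J : ℝ → ℝ → ℝ)
    (hJ : ∀ σ τ, J σ τ =
      (4*π^2*(k : ℝ)*(Real.sqrt ((2*σ^2 + 1)^2 - 1))⁻¹/(E*lk)) *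
        (1 - ((2*σ^2 + 1) - Real.sqrt ((2*σ^2 + 1)^2 - 1))
          + 2*σ*((2*σ^2 + 1) - Real.sqrt ((2*σ^2 + 1)^2 - 1))*τ)) :
    (∀ σ : ℝ, 0 < σ → 0 < J σ 0) ∧
    StrictAntiOn (fun σ => J σ 0) (Set.Ioi 0) ∧
    Tendsto (fun σ => J σ 0) atTop (nhds 0) := by
  set D : ℝ → ℝ := fun σ => σ^2 + 1 + σ*√(σ^2 + 1)
  set C : ℝ := 4*π^2*k/(E*lk)
  have hC : 0 < C := by
    have : (0 : ℝ) < k := by exact_mod_cast hk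
    positivity
  have hD : ∀ σ, 0 < σ → 0 < D σ := fun σ hσ => by positivity
  have hJ0 : ∀ σ, 0 < σ → J σ 0 = C * (D σ)⁻¹ := fun σ hσ => by
    rw [hJ, ← inv_sqrt_mul_one_sub_sub_sqrt hσ]
    ring
  refine ⟨fun σ hσ => hJ0 σ hσ ▸ mul_pos hC (inv_pos.2 (hD σ hσ)), ?_, ?_⟩
  · intro x (hx : 0 < x) y (hy : 0 < y) hxy
    simp only [hJ0 x hx, hJ0 y hy]
    gcongr
    exact strictMonoOn_sq_add_one_add_mul_sqrt hx.le hy.le hxy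
  · have hlim := (tendsto_inv_atTop_zero.comp tendsto_sq_add_one_add_mul_sqrt_atTop).const_mul C
    rw [mul_zero] at hlim
    refine hlim.congr' ?_
    filter_upwards [eventually_gt_atTop 0] with σ hσ
    exact (hJ0 σ hσ).symm
end
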